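/- For all p ≥ 1/4 and all r ∈ (0,1), (π/2)·(1-r)^p < K(r) < (π/2)·(1-r)^{-p}. -/

import Mathlib

/-!
The integrand `(1 - r sin² t)^(-1/2)` is at least `1`, so `K r ≥ π / 2 > π / 2 * (1 - r) ^ p`.
For the upper bound, AM-GM `x ≤ x² / (2c) + c / 2` with `x = (1 - r sin² t)^(-1/2)` and
`c = (1 - r)^(-1/4)` bounds `K r` by an integral of `(1 - r sin² t)⁻¹`, which is elementary
(`∫₀^{π/2} (1 - r sin² t)⁻¹ dt = π / (2√(1 - r))`) and gives exactly `π / 2 * (1 - r)^(-1/4)`;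
the bound is strict since `x = 1 ≠ c` at `t = 0`. Finally `(1 - r)^(-1/4) ≤ (1 - r)^(-p)`.
-/

open Real Set Filter

noncomputable def K (x : ℝ) : ℝ :=
  ∫ t in (0 : ℝ)..(π / 2), (1 - x * Real.sin t ^ 2) ^ (-(1/2) : ℝ)

noncomputable def E (x : ℝ) : ℝ :=
  ∫ t in (0 : ℝ)..(π / 2), (1 - x * Real.sin t ^ 2) ^ ((1/2) : ℝ)

open Topology intervalIntegral

lemma one_sub_mul_sin_sq_pos {r : ℝ} (hr : r < 1) (t : ℝ) : 0 < 1 - r * sin t ^ 2 := by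
  nlinarith [sin_sq_le_one t, mul_nonneg (sq_nonneg (sin t)) (sub_nonneg.2 hr.le),
    mul_nonneg (sub_nonneg.2 hr.le) (sub_nonneg.2 (sin_sq_le_one t))]

lemma continuous_one_sub_mul_sin_sq_rpow {r : ℝ} (hr : r < 1) (a : ℝ) :
    Continuous fun t => (1 - r * sin t ^ 2) ^ a :=
  (by fun_prop : Continuous fun t => 1 - r * sin t ^ 2).rpow_const
    fun t => Or.inl (one_sub_mul_sin_sq_pos hr t).ne'

lemma continuous_inv_one_sub_mul_sin_sq {r : ℝ} (hr : r < 1) :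
    Continuous fun t => (1 - r * sin t ^ 2)⁻¹ := by
  simpa [rpow_neg_one] using continuous_one_sub_mul_sin_sq_rpow hr (-1)

lemma hasDerivAt_inv_mul_arctan_mul_tan {s t : ℝ} (hs : s ≠ 0) (hcos : cos t ≠ 0) :
    HasDerivAt (fun x => s⁻¹ * arctan (s * tan x)) (1 - (1 - s ^ 2) * sin t ^ 2)⁻¹ t := by
  refine (((hasDerivAt_tan hcos).const_mul s).arctan.const_mul s⁻¹).congr_deriv ?_
  have hden : 1 - (1 - s ^ 2) * sin t ^ 2 = cos t ^ 2 + s ^ 2 * sin t ^ 2 := by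
    linear_combination -sin_sq_add_cos_sq t
  have : cos t ^ 2 + s ^ 2 * sin t ^ 2 ≠ 0 := by positivity
  rw [hden, tan_eq_sin_div_cos]
  field_simp

/-- The antiderivative `s⁻¹ * arctan (s * tan t)`, `s = √(1 - r)`, is evaluated as an improper
integral because of the pole of `tan` at `π / 2`. -/
lemma integral_inv_one_sub_mul_sin_sq {r : ℝ} (hr : r < 1) :
    ∫ t in (0 : ℝ)..(π / 2), (1 - r * sin t ^ 2)⁻¹ = π / (2 * √(1 - r)) := by
  set s := √(1 - r)
  have hs : 0 < s := sqrt_pos.2 (by linarith)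
  have hs2 : 1 - s ^ 2 = r := by rw [sq_sqrt (by linarith)]; ring
  have hderiv : ∀ t ∈ Ioo 0 (π / 2),
      HasDerivAt (fun x => s⁻¹ * arctan (s * tan x)) (1 - r * sin t ^ 2)⁻¹ t := fun t ht => by
    rw [← hs2]
    exact hasDerivAt_inv_mul_arctan_mul_tan hs.ne'
      (cos_pos_of_mem_Ioo ⟨by linarith [ht.1, pi_pos], ht.2⟩).ne'
  have hzero : Tendsto (fun x => s⁻¹ * arctan (s * tan x)) (𝓝[>] 0) (𝓝 0) := by
    have : ContinuousAt (fun x => s⁻¹ * arctan (s * tan x)) 0 :=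
      (continuous_arctan.continuousAt.comp
        ((continuousAt_tan.2 (by simp)).const_mul s)).const_mul _
    simpa using this.tendsto.mono_left nhdsWithin_le_nhds
  have hpole : Tendsto (fun x => s⁻¹ * arctan (s * tan x)) (𝓝[<] (π / 2)) (𝓝 (s⁻¹ * (π / 2))) :=
    ((tendsto_arctan_atTop.mono_right nhdsWithin_le_nhds).comp
      (tendsto_tan_pi_div_two.const_mul_atTop hs)).const_mul s⁻¹
  rw [integral_eq_sub_of_hasDerivAt_of_tendsto (by positivity) hderiv
    ((continuous_inv_one_sub_mul_sin_sq hr).intervalIntegrable _ _) hzero hpole]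
  field_simp
  ring

lemma pi_div_two_le_K {r : ℝ} (hr0 : 0 ≤ r) (hr1 : r < 1) : π / 2 ≤ K r := by
  have hle : ∀ t ∈ Icc (0 : ℝ) (π / 2), 1 ≤ (1 - r * sin t ^ 2) ^ (-(1/2) : ℝ) := fun t _ =>
    one_le_rpow_of_pos_of_le_one_of_nonpos (one_sub_mul_sin_sq_pos hr1 t)
      (by nlinarith [sq_nonneg (sin t)]) (by norm_num)
  calc π / 2 = ∫ _ in (0 : ℝ)..(π / 2), (1 : ℝ) := by simp
    _ ≤ K r := integral_mono_on (by positivity) intervalIntegrable_const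
      ((continuous_one_sub_mul_sin_sq_rpow hr1 _).intervalIntegrable _ _) hle

lemma rpow_neg_half_le_inv_div_add {u c : ℝ} (hu : 0 < u) (hc : 0 < c) :
    u ^ (-(1/2) : ℝ) ≤ u⁻¹ / (2 * c) + c / 2 := by
  have hsq : (u ^ (-(1/2) : ℝ)) ^ 2 = u⁻¹ := by
    rw [← rpow_mul_natCast hu.le]; norm_num [rpow_neg_one]
  rw [← hsq, div_add_div _ _ (by positivity) two_ne_zero, le_div_iff₀ (by positivity)]
  nlinarith [sq_nonneg (u ^ (-(1/2) : ℝ) - c)]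

lemma K_lt_pi_div_two_mul_rpow_neg_quarter {r : ℝ} (hr0 : 0 < r) (hr1 : r < 1) :
    K r < π / 2 * (1 - r) ^ (-(1/4) : ℝ) := by
  have h1r : 0 < 1 - r := by linarith
  set c := (1 - r) ^ (-(1/4) : ℝ)
  have hc1 : 1 < c := one_lt_rpow_of_pos_of_lt_one_of_neg h1r (by linarith) (by norm_num)
  have hsqrt : √(1 - r) = (c ^ 2)⁻¹ := by
    rw [sqrt_eq_rpow, ← rpow_mul_natCast h1r.le, ← rpow_neg h1r.le]; norm_num
  have hinv := continuous_inv_one_sub_mul_sin_sq hr1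
  calc K r < ∫ t in (0 : ℝ)..(π / 2), ((1 - r * sin t ^ 2)⁻¹ / (2 * c) + c / 2) := by
        refine integral_lt_integral_of_continuousOn_of_le_of_exists_lt (by positivity)
          (continuous_one_sub_mul_sin_sq_rpow hr1 _).continuousOn
          ((hinv.div_const _).add continuous_const).continuousOn
          (fun t _ => rpow_neg_half_le_inv_div_add (one_sub_mul_sin_sq_pos hr1 t) (by positivity))
          ⟨0, ⟨le_rfl, by positivity⟩, ?_⟩
        rw [sin_zero]
        norm_num
        field_simp
        nlinarith
    _ = π / (2 * √(1 - r)) / (2 * c) + π / 2 * (c / 2) := by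
        rw [integral_add ((hinv.div_const _).intervalIntegrable _ _) intervalIntegrable_const,
          integral_div, integral_inv_one_sub_mul_sin_sq hr1, integral_const]
        simp
    _ = π / 2 * c := by
        rw [hsqrt]
        field_simp
        ring

theorem stmt19 (p : ℝ) (hp : p ≥ 1/4) :
    ∀ r ∈ Ioo (0 : ℝ) 1,
      (π / 2) * (1 - r) ^ p < K r ∧ K r < (π / 2) * (1 - r) ^ (-p) := by
  rintro r ⟨hr0, hr1⟩
  have h1r : 0 < 1 - r := by linarith
  constructor
  · calc π / 2 * (1 - r) ^ p < π / 2 * 1 := by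
          gcongr; exact rpow_lt_one h1r.le (by linarith) (by linarith)
      _ ≤ K r := by simpa using pi_div_two_le_K hr0.le hr1
  · calc K r < π / 2 * (1 - r) ^ (-(1/4) : ℝ) := K_lt_pi_div_two_mul_rpow_neg_quarter hr0 hr1
      _ ≤ π / 2 * (1 - r) ^ (-p) := by
          gcongr π / 2 * ?_
          exact rpow_le_rpow_of_exponent_ge h1r (by linarith) (by linarith)
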